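/- arXiv:1709.09275 — 4 statements merged into one kernel-verified Lean document; each statement's English description precedes it below -/
import Mathlib

section
/- Let {X^{N,M}} be, for each M, a family satisfying the large deviation principle with rate function I_M, and suppose {X^{N,M}} is an exponentially good approximation of {X^N}. Then {X^N} satisfies the weak large deviation principle with rate function I(y) := sup_{ε>0} liminf_{M→∞} inf_{x ∈ B_ε(y)} I_M(x); that is, for every open set A ⊆ S, liminf_{N→∞} (1/N) log P(X^N ∈ A) ≥ −inf_{x∈A} I(x), and for every compact set B ⊆ S, limsup_{N→∞} (1/N) log P(X^N ∈ B) ≤ −inf_{x∈B} I(x). -/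
/-!
Both bounds compare `X^N` with `X^{N,M}` through the inclusions
`{X^{N,M} ∈ s} ⊆ {X^N ∈ t} ∪ {d(X^N, X^{N,M}) > δ}` whenever the closed `δ`-neighbourhood of `s`
lies in `t`, after which the error event is exponentially negligible once `M` is large.
For the lower bound, a small ball around `y ∈ A` is used with those `M` for which `I_M` is
nearly `I(y)` on it. For the upper bound, compactness gives finitely many balls on which
`I_M > ρ` for all large `M`, and the scaled log-probability of a finite sum is controlled by its
largest term.
-/

open Filter MeasureTheory
open scoped ENNReal

/-- The rescaled log-probability `(1/N) log P(X^N ∈ A)`, valued in the extended reals,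
with `log 0 = -∞`. -/
noncomputable def scaledLogProb {S : Type*} [MetricSpace S] [MeasurableSpace S]
    {Ω : Type*} [MeasurableSpace Ω] (P : Measure Ω) (X : ℕ → Ω → S) (A : Set S) (N : ℕ) :
    EReal :=
  (((N : ℝ)⁻¹ : ℝ) : EReal) * ENNReal.log (P (X N ⁻¹' A))

/-- The family `X^N` satisfies the large deviation lower bound for every open set,
with rate function `I`. -/
def LDPLowerBound {S : Type*} [MetricSpace S] [MeasurableSpace S]
    {Ω : Type*} [MeasurableSpace Ω] (P : Measure Ω) (X : ℕ → Ω → S) (I : S → ℝ≥0∞) : Prop :=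
  ∀ A : Set S, IsOpen A →
    -((⨅ x ∈ A, I x : ℝ≥0∞) : EReal) ≤ Filter.atTop.liminf (scaledLogProb P X A)

/-- The family `X^N` satisfies the large deviation upper bound for every closed set,
with rate function `I`. -/
def LDPUpperBound {S : Type*} [MetricSpace S] [MeasurableSpace S]
    {Ω : Type*} [MeasurableSpace Ω] (P : Measure Ω) (X : ℕ → Ω → S) (I : S → ℝ≥0∞) : Prop :=
  ∀ B : Set S, IsClosed B →
    Filter.atTop.limsup (scaledLogProb P X B) ≤ -((⨅ x ∈ B, I x : ℝ≥0∞) : EReal)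

/-- `X^{N,M}` is an exponentially good approximation of `X^N`. -/
def ExpGoodApprox {S : Type*} [MetricSpace S] [MeasurableSpace S]
    {Ω : Type*} [MeasurableSpace Ω] (P : Measure Ω)
    (X : ℕ → Ω → S) (XM : ℕ → ℕ → Ω → S) : Prop :=
  ∀ ε : ℝ, 0 < ε →
    Filter.Tendsto
      (fun M => Filter.atTop.limsup
        (fun (N : ℕ) => (((N : ℝ)⁻¹ : ℝ) : EReal) *
          ENNReal.log (P {ω | ε < dist (X N ω) (XM M N ω)})))
      Filter.atTop (nhds (⊥ : EReal))

/-- The candidate rate function `I(y) = sup_{ε>0} liminf_{M→∞} inf_{x ∈ B_ε(y)} I_M(x)`. -/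
noncomputable def approxRate {S : Type*} [MetricSpace S] (IM : ℕ → S → ℝ≥0∞) (y : S) : ℝ≥0∞ :=
  ⨆ (ε : ℝ) (_ : 0 < ε), Filter.atTop.liminf (fun M => ⨅ x ∈ Metric.ball y ε, IM M x)

open Metric Topology

noncomputable def scaledLog (p : ℕ → ℝ≥0∞) (N : ℕ) : EReal :=
  (((N : ℝ)⁻¹ : ℝ) : EReal) * ENNReal.log (p N)

-- Bounds `exp (c + N t)` with a free constant `c` survive finite sums, which `limsup`s of
-- scaled logarithms in `EReal` do not do directly.
def ExpUpperBound (p : ℕ → ℝ≥0∞) (t : ℝ) : Prop :=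
  ∃ c : ℝ, ∀ᶠ N : ℕ in atTop, p N ≤ ENNReal.ofReal (Real.exp (c + N * t))

def ExpLowerBound (p : ℕ → ℝ≥0∞) (t : ℝ) : Prop :=
  ∃ c : ℝ, ∀ᶠ N : ℕ in atTop, ENNReal.ofReal (Real.exp (c + N * t)) ≤ p N

section ScaledLog

variable {p q r : ℕ → ℝ≥0∞} {t t' : ℝ}

lemma scaledLog_eq_log_div {N : ℕ} : scaledLog p N = ENNReal.log (p N) / ((N : ℝ) : EReal) := by
  rw [scaledLog, EReal.coe_inv, EReal.div_eq_inv_mul]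

lemma scaledLog_le_iff {N : ℕ} (hN : 0 < N) :
    scaledLog p N ≤ t ↔ p N ≤ ENNReal.ofReal (Real.exp (N * t)) := by
  have hN' : (0 : EReal) < ((N : ℝ) : EReal) := by exact_mod_cast hN
  rw [scaledLog_eq_log_div, EReal.div_le_iff_le_mul hN' (EReal.coe_ne_top _), ← EReal.coe_mul,
    ← EReal.exp_coe]
  exact ENNReal.logOrderIso.le_symm_apply.symm

lemma le_scaledLog_iff {N : ℕ} (hN : 0 < N) :
    t ≤ scaledLog p N ↔ ENNReal.ofReal (Real.exp (N * t)) ≤ p N := by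
  have hN' : (0 : EReal) < ((N : ℝ) : EReal) := by exact_mod_cast hN
  rw [scaledLog_eq_log_div, EReal.le_div_iff_mul_le hN' (EReal.coe_ne_top _), mul_comm,
    ← EReal.coe_mul, ← EReal.exp_coe]
  exact ENNReal.logOrderIso.symm_apply_le.symm

lemma tendsto_const_div_add_nhds (c t : ℝ) :
    Tendsto (fun N : ℕ => ((c / N + t : ℝ) : EReal)) atTop (𝓝 t) :=
  EReal.tendsto_coe.2 <| by
    simpa using (tendsto_const_div_atTop_nhds_zero_nat c).add_const t

lemma ExpUpperBound.limsup_scaledLog_le (h : ExpUpperBound p t) :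
    limsup (scaledLog p) atTop ≤ t := by
  obtain ⟨c, hc⟩ := h
  have hle : ∀ᶠ N in atTop, scaledLog p N ≤ ((c / N + t : ℝ) : EReal) := by
    filter_upwards [hc, eventually_gt_atTop 0] with N hN hpos
    rw [scaledLog_le_iff hpos]
    convert hN using 4
    field_simp
  exact (limsup_le_limsup hle).trans (tendsto_const_div_add_nhds c t).limsup_eq.le

lemma ExpLowerBound.le_liminf_scaledLog (h : ExpLowerBound p t) :
    t ≤ liminf (scaledLog p) atTop := by
  obtain ⟨c, hc⟩ := h
  have hle : ∀ᶠ N : ℕ in atTop, ((c / N + t : ℝ) : EReal) ≤ scaledLog p N := by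
    filter_upwards [hc, eventually_gt_atTop 0] with N hN hpos
    rw [le_scaledLog_iff hpos]
    convert hN using 4
    field_simp
  exact (tendsto_const_div_add_nhds c t).liminf_eq.ge.trans (liminf_le_liminf hle)

lemma expUpperBound_of_limsup_scaledLog_lt (h : limsup (scaledLog p) atTop < t) :
    ExpUpperBound p t :=
  ⟨0, by
    filter_upwards [eventually_lt_of_limsup_lt h, eventually_gt_atTop 0] with N hN hpos
    simpa [scaledLog_le_iff hpos] using hN.le⟩

lemma expLowerBound_of_lt_liminf_scaledLog (h : t < liminf (scaledLog p) atTop) :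
    ExpLowerBound p t :=
  ⟨0, by
    filter_upwards [eventually_lt_of_lt_liminf h, eventually_gt_atTop 0] with N hN hpos
    simpa [le_scaledLog_iff hpos] using hN.le⟩

lemma ExpUpperBound.mono (h : ExpUpperBound q t) (hpq : ∀ᶠ N in atTop, p N ≤ q N) :
    ExpUpperBound p t := by
  obtain ⟨c, hc⟩ := h
  exact ⟨c, by filter_upwards [hc, hpq] with N hq hp using hp.trans hq⟩

lemma ExpUpperBound.add (hp : ExpUpperBound p t) (hq : ExpUpperBound q t) :
    ExpUpperBound (fun N => p N + q N) t := by
  obtain ⟨c₁, hc₁⟩ := hp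
  obtain ⟨c₂, hc₂⟩ := hq
  refine ⟨Real.log (Real.exp c₁ + Real.exp c₂), ?_⟩
  filter_upwards [hc₁, hc₂] with N h₁ h₂
  have hsplit : Real.exp (Real.log (Real.exp c₁ + Real.exp c₂) + N * t)
      = Real.exp (c₁ + N * t) + Real.exp (c₂ + N * t) := by
    rw [Real.exp_add, Real.exp_log (by positivity), Real.exp_add, Real.exp_add]
    ring
  rw [hsplit, ENNReal.ofReal_add (by positivity) (by positivity)]
  exact add_le_add h₁ h₂

lemma ExpUpperBound.finset_sum {ι : Type*} (T : Finset ι) {f : ι → ℕ → ℝ≥0∞}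
    (h : ∀ i ∈ T, ExpUpperBound (f i) t) : ExpUpperBound (fun N => ∑ i ∈ T, f i N) t := by
  classical
  induction T using Finset.induction_on with
  | empty => exact ⟨0, by simp⟩
  | insert a T ha ih =>
    simp only [Finset.sum_insert ha]
    exact (h a (Finset.mem_insert_self a T)).add
      (ih fun i hi => h i (Finset.mem_insert_of_mem hi))

lemma ExpLowerBound.of_le_add (hq : ExpLowerBound q t) (hr : ExpUpperBound r t') (htt' : t' < t)
    (h : ∀ N, q N ≤ p N + r N) : ExpLowerBound p t := by
  obtain ⟨c, hc⟩ := hq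
  obtain ⟨c', hc'⟩ := hr
  refine ⟨c - Real.log 2, ?_⟩
  have hgap : ∀ᶠ N : ℕ in atTop, c' + N * t' ≤ c - Real.log 2 + N * t := by
    have h := (tendsto_natCast_atTop_atTop.atTop_mul_const (sub_pos.2 htt')).eventually_ge_atTop
      (c' - c + Real.log 2)
    filter_upwards [h] with N hN
    nlinarith
  filter_upwards [hc, hc', hgap] with N hq hr hN
  set a := ENNReal.ofReal (Real.exp (c - Real.log 2 + N * t))
  have hqa : a + a ≤ q N := by
    convert hq using 1
    rw [← ENNReal.ofReal_add (by positivity) (by positivity), sub_add_eq_add_sub, Real.exp_sub,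
      Real.exp_log two_pos, add_halves]
  have hra : r N ≤ a := hr.trans (ENNReal.ofReal_le_ofReal (Real.exp_le_exp.2 hN))
  exact ENNReal.le_of_add_le_add_right (hra.trans_lt ENNReal.ofReal_lt_top).ne
    ((add_le_add_right hra a).trans (hqa.trans (h N)))

lemma limsup_scaledLog_le_of_forall_expUpperBound {s : EReal}
    (h : ∀ u : ℝ, s < u → ExpUpperBound p u) : limsup (scaledLog p) atTop ≤ s := by
  refine le_of_forall_gt_imp_ge_of_dense fun v hv => ?_
  obtain ⟨u, hsu, huv⟩ := EReal.exists_between_coe_real hv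
  exact (h u hsu).limsup_scaledLog_le.trans huv.le

lemma liminf_scaledLog_le_of_le_add (h : ∀ N, q N ≤ p N + r N)
    (hr : limsup (scaledLog r) atTop < liminf (scaledLog q) atTop) :
    liminf (scaledLog q) atTop ≤ liminf (scaledLog p) atTop := by
  refine le_of_forall_lt_imp_le_of_dense fun s hs => ?_
  obtain ⟨u, hu, huq⟩ := EReal.exists_between_coe_real (max_lt hr hs)
  obtain ⟨v, huv, hvq⟩ := EReal.exists_between_coe_real huq
  have hp : ExpLowerBound p v :=
    (expLowerBound_of_lt_liminf_scaledLog hvq).of_le_add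
      (expUpperBound_of_limsup_scaledLog_lt ((le_max_left _ _).trans_lt hu))
      (by exact_mod_cast huv) h
  exact ((le_max_right _ _).trans (hu.trans huv).le).trans hp.le_liminf_scaledLog

end ScaledLog

lemma le_liminf_scaledLog_of_frequently_le {p : ℕ → ℝ≥0∞} {q r : ℕ → ℕ → ℝ≥0∞}
    (h : ∀ M N, q M N ≤ p N + r M N)
    (hr : Tendsto (fun M => limsup (scaledLog (r M)) atTop) atTop (𝓝 ⊥)) {s : EReal}
    (hs : ∃ᶠ M in atTop, s ≤ liminf (scaledLog (q M)) atTop) :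
    s ≤ liminf (scaledLog p) atTop := by
  rcases eq_bot_or_bot_lt s with rfl | hs_bot
  · exact bot_le
  obtain ⟨M, hqM, hrM⟩ := (hs.and_eventually (hr.eventually (Iio_mem_nhds hs_bot))).exists
  exact hqM.trans (liminf_scaledLog_le_of_le_add (h M) (hrM.trans_le hqM))

lemma limsup_scaledLog_le_of_le_sum {ι : Type*} (T : Finset ι) {p : ℕ → ℝ≥0∞}
    {q r : ι → ℕ → ℕ → ℝ≥0∞} (h : ∀ M N, p N ≤ ∑ i ∈ T, (q i M N + r i M N)) {s : EReal}
    (hq : ∀ᶠ M in atTop, ∀ i ∈ T, limsup (scaledLog (q i M)) atTop ≤ s)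
    (hr : ∀ i ∈ T, Tendsto (fun M => limsup (scaledLog (r i M)) atTop) atTop (𝓝 ⊥)) :
    limsup (scaledLog p) atTop ≤ s := by
  refine limsup_scaledLog_le_of_forall_expUpperBound fun u hu => ?_
  have hr' : ∀ᶠ M in atTop, ∀ i ∈ T, limsup (scaledLog (r i M)) atTop < u :=
    (eventually_all_finset T).2 fun i hi =>
      (hr i hi).eventually (Iio_mem_nhds (bot_le.trans_lt hu))
  obtain ⟨M, hqM, hrM⟩ := (hq.and hr').exists
  refine (ExpUpperBound.finset_sum T fun i hi => ?_).mono (.of_forall (h M))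
  exact (expUpperBound_of_limsup_scaledLog_lt ((hqM i hi).trans_lt hu)).add
    (expUpperBound_of_limsup_scaledLog_lt (hrM i hi))

lemma EReal.neg_coe_ennreal_le_of_forall_lt {c : ℝ≥0∞} {L : EReal}
    (h : ∀ ρ : ℝ≥0∞, c < ρ → -(ρ : EReal) ≤ L) : -(c : EReal) ≤ L := by
  rw [EReal.neg_le]
  refine le_of_forall_gt_imp_ge_of_dense fun a ha => ?_
  have ha₀ : 0 ≤ a := (EReal.coe_ennreal_nonneg c).trans ha.le
  rw [← EReal.coe_toENNReal ha₀] at ha ⊢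
  exact EReal.neg_le.1 (h _ (EReal.coe_ennreal_lt_coe_ennreal_iff.1 ha))

lemma EReal.le_neg_coe_ennreal_of_forall_lt {c : ℝ≥0∞} {L : EReal} (h₀ : L ≤ 0)
    (h : ∀ ρ : ℝ≥0∞, ρ < c → L ≤ -(ρ : EReal)) : L ≤ -(c : EReal) := by
  rw [EReal.le_neg]
  refine le_of_forall_lt_imp_le_of_dense fun a ha => ?_
  rcases le_total a 0 with ha₀ | ha₀
  · exact ha₀.trans (EReal.le_neg.1 (by simpa using h₀))
  rw [← EReal.coe_toENNReal ha₀] at ha ⊢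
  exact EReal.le_neg.1 (h _ (EReal.coe_ennreal_lt_coe_ennreal_iff.1 ha))

lemma measure_preimage_le_add_measure_dist_gt {Ω S : Type*} [MeasurableSpace Ω]
    [PseudoMetricSpace S] (μ : Measure Ω) (f g : Ω → S) {s t : Set S} {δ : ℝ}
    (hst : ∀ x ∈ s, closedBall x δ ⊆ t) :
    μ (f ⁻¹' s) ≤ μ (g ⁻¹' t) + μ {ω | δ < dist (f ω) (g ω)} := by
  refine (measure_mono fun ω hω => ?_).trans (measure_union_le _ _)
  by_cases hδ : δ < dist (f ω) (g ω)
  · exact Or.inr hδ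
  · exact Or.inl (hst _ hω (mem_closedBall'.2 (not_lt.1 hδ)))

section ExpGoodApprox

variable {S : Type*} [MetricSpace S] [MeasurableSpace S] {Ω : Type*} [MeasurableSpace Ω]
  {P : Measure Ω} {X : ℕ → Ω → S} {XM : ℕ → ℕ → Ω → S} {IM : ℕ → S → ℝ≥0∞}

lemma neg_approxRate_le_liminf_scaledLogProb (hLDP : ∀ M, LDPLowerBound P (XM M) (IM M))
    (hApprox : ExpGoodApprox P X XM) {A : Set S} (hA : IsOpen A) {y : S} (hy : y ∈ A) :
    -(approxRate IM y : EReal) ≤ liminf (scaledLogProb P X A) atTop := by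
  obtain ⟨ε, hε, hball⟩ := Metric.isOpen_iff.1 hA y hy
  have hrate : liminf (fun M => ⨅ x ∈ ball y (ε / 2), IM M x) atTop ≤ approxRate IM y :=
    le_iSup₂ (f := fun (e : ℝ) (_ : 0 < e) => liminf (fun M => ⨅ x ∈ ball y e, IM M x) atTop)
      (ε / 2) (half_pos hε)
  refine (EReal.neg_le_neg_iff.2 (EReal.coe_ennreal_le_coe_ennreal_iff.2 hrate)).trans
    (EReal.neg_coe_ennreal_le_of_forall_lt fun ρ hρ => ?_)
  have hsub : ∀ x ∈ ball y (ε / 2), closedBall x (ε / 4) ⊆ A := fun x hx =>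
    (closedBall_subset_ball' (by rw [mem_ball] at hx; linarith)).trans hball
  refine le_liminf_scaledLog_of_frequently_le
    (q := fun M N => P (XM M N ⁻¹' ball y (ε / 2)))
    (r := fun M N => P {ω | ε / 4 < dist (X N ω) (XM M N ω)})
    (fun M N => by simpa only [dist_comm] using
      measure_preimage_le_add_measure_dist_gt P (XM M N) (X N) hsub)
    (hApprox _ (by positivity)) ?_
  refine (frequently_lt_of_liminf_lt (by isBoundedDefault) hρ).mono fun M hM => ?_
  exact (EReal.neg_le_neg_iff.2 (EReal.coe_ennreal_le_coe_ennreal_iff.2 hM.le)).trans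
    (hLDP M _ isOpen_ball)

lemma limsup_scaledLogProb_le_of_lt_approxRate (hLDP : ∀ M, LDPUpperBound P (XM M) (IM M))
    (hApprox : ExpGoodApprox P X XM) {B : Set S} (hB : IsCompact B) {ρ : ℝ≥0∞}
    (hρ : ∀ y ∈ B, ρ < approxRate IM y) :
    limsup (scaledLogProb P X B) atTop ≤ -(ρ : EReal) := by
  have hrad : ∀ y ∈ B, ∃ ε > 0, ∀ᶠ M in atTop, ρ < ⨅ x ∈ ball y ε, IM M x := fun y hy => by
    obtain ⟨ε, hε⟩ := lt_iSup_iff.1 (hρ y hy)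
    obtain ⟨hε_pos, hε⟩ := lt_iSup_iff.1 hε
    exact ⟨ε, hε_pos, eventually_lt_of_lt_liminf hε⟩
  choose! ε hε_pos hε using hrad
  obtain ⟨T, hTB, hcover⟩ := hB.elim_nhds_subcover (fun y => ball y (ε y / 2))
    fun y hy => ball_mem_nhds y (half_pos (hε_pos y hy))
  refine limsup_scaledLog_le_of_le_sum T
    (q := fun y M N => P (XM M N ⁻¹' closedBall y (3 / 4 * ε y)))
    (r := fun y M N => P {ω | ε y / 4 < dist (X N ω) (XM M N ω)}) (fun M N => ?_) ?_
    fun y hy => hApprox _ (by have := hε_pos y (hTB y hy); positivity)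
  · calc P (X N ⁻¹' B) ≤ P (⋃ y ∈ T, X N ⁻¹' ball y (ε y / 2)) := by
          refine measure_mono fun ω hω => ?_
          simpa using hcover hω
      _ ≤ ∑ y ∈ T, P (X N ⁻¹' ball y (ε y / 2)) := measure_biUnion_finset_le _ _
      _ ≤ _ := Finset.sum_le_sum fun y _ =>
          measure_preimage_le_add_measure_dist_gt P (X N) (XM M N) fun x hx =>
            closedBall_subset_closedBall' (by rw [mem_ball] at hx; linarith)
  · refine (eventually_all_finset T).2 fun y hy => (hε y (hTB y hy)).mono fun M hM => ?_
    have hball : closedBall y (3 / 4 * ε y) ⊆ ball y (ε y) :=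
      closedBall_subset_ball (by have := hε_pos y (hTB y hy); linarith)
    refine (hLDP M _ isClosed_closedBall).trans (EReal.neg_le_neg_iff.2 ?_)
    exact EReal.coe_ennreal_le_coe_ennreal_iff.2 (hM.le.trans (biInf_mono fun x hx => hball hx))

end ExpGoodApprox

theorem weak_LDP_of_expGoodApprox_general
    {S : Type*} [MetricSpace S] [MeasurableSpace S]
    {Ω : Type*} [MeasurableSpace Ω] (P : Measure Ω) [IsProbabilityMeasure P]
    (X : ℕ → Ω → S) (XM : ℕ → ℕ → Ω → S)
    (IM : ℕ → S → ℝ≥0∞)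
    (hLDP : ∀ M, LDPLowerBound P (XM M) (IM M) ∧ LDPUpperBound P (XM M) (IM M))
    (hApprox : ExpGoodApprox P X XM) :
    (∀ A : Set S, IsOpen A →
      -((⨅ x ∈ A, approxRate IM x : ℝ≥0∞) : EReal) ≤
        Filter.atTop.liminf (scaledLogProb P X A)) ∧
    (∀ B : Set S, IsCompact B →
      Filter.atTop.limsup (scaledLogProb P X B) ≤
        -((⨅ x ∈ B, approxRate IM x : ℝ≥0∞) : EReal)) := by
  refine ⟨fun A hA => EReal.neg_coe_ennreal_le_of_forall_lt fun ρ hρ => ?_,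
    fun B hB => EReal.le_neg_coe_ennreal_of_forall_lt ?_ fun ρ hρ => ?_⟩
  · obtain ⟨y, hyρ⟩ := iInf_lt_iff.1 hρ
    obtain ⟨hy, hyρ⟩ := iInf_lt_iff.1 hyρ
    exact (EReal.neg_le_neg_iff.2 (EReal.coe_ennreal_le_coe_ennreal_iff.2 hyρ.le)).trans
      (neg_approxRate_le_liminf_scaledLogProb (fun M => (hLDP M).1) hApprox hA hy)
  · have hprob : ExpUpperBound (fun N => P (X N ⁻¹' B)) 0 :=
      ⟨0, .of_forall fun N => by simpa using prob_le_one⟩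
    exact hprob.limsup_scaledLog_le.trans_eq EReal.coe_zero
  · exact limsup_scaledLogProb_le_of_lt_approxRate (fun M => (hLDP M).2) hApprox hB
      fun y hy => hρ.trans_le (biInf_le _ hy)

/-- If for each `M` the family `{X^{N,M}}_N` satisfies the LDP with rate function `I_M`,
and `{X^{N,M}}` is an exponentially good approximation of `{X^N}`, then `{X^N}` satisfies the
weak LDP with rate function `I(y) = sup_{ε>0} liminf_{M→∞} inf_{x ∈ B_ε(y)} I_M(x)`:
the lower bound holds for every open set and the upper bound holds for every compact set. -/
theorem weak_LDP_of_expGoodApprox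
    {S : Type*} [MetricSpace S] [MeasurableSpace S] [BorelSpace S]
    {Ω : Type*} [MeasurableSpace Ω] (P : Measure Ω) [IsProbabilityMeasure P]
    (X : ℕ → Ω → S) (XM : ℕ → ℕ → Ω → S)
    (hX : ∀ N, Measurable (X N)) (hXM : ∀ M N, Measurable (XM M N))
    (IM : ℕ → S → ℝ≥0∞)
    (hLDP : ∀ M, LDPLowerBound P (XM M) (IM M) ∧ LDPUpperBound P (XM M) (IM M))
    (hApprox : ExpGoodApprox P X XM) :
    (∀ A : Set S, IsOpen A →
      -((⨅ x ∈ A, approxRate IM x : ℝ≥0∞) : EReal) ≤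
        Filter.atTop.liminf (scaledLogProb P X A)) ∧
    (∀ B : Set S, IsCompact B →
      Filter.atTop.limsup (scaledLogProb P X B) ≤
        -((⨅ x ∈ B, approxRate IM x : ℝ≥0∞) : EReal)) :=
  weak_LDP_of_expGoodApprox_general P X XM IM hLDP hApprox
end

section
/- Suppose that for each reaction k ∈ K the jump rate satisfies λ_k(z) ≤ (θ_{k,0} + θ_k · z)(Σ_i z_i) for all z ∈ ℝ^d_{≥0}, and that there is a conservation vector θ̃^{(k)} ∈ ℝ^d_{≥0} with ζ_l · θ̃^{(k)} = 0 for every l ∈ K and constants a_{k,i} with 0 < a_min ≤ a_{k,i} ≤ a_max and θ̃^{(k)}_i = a_{k,i} θ_{k,i} for every i. Let (x_n)_{n∈ℕ} be any sequence in ℝ^d_{≥0} such that for every n there exists l_n ∈ K with x_{n+1} = x_n + ζ_{l_n}, and suppose x_0 · θ_k ≤ C for every k. Then for every M ≥ (a_max / a_min) · C, the truncated rates coincide with the original rates along the entire trajectory: λ_k(x_n) = min( λ_k(x_n), (θ_{k,0} + M)(Σ_i x_{n,i}) ) for all n and all k ∈ K. -/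
open Finset

/-- Deterministic content of case (i) of the truncation proposition: if each jump rate
satisfies `λ_k(z) ≤ (θ_{k,0} + θ_k · z)(Σ_i z_i)`, each `θ_k` is dominated by a conservation
vector `θ̃^{(k)}` (with `θ̃^{(k)}_i = a_{k,i} θ_{k,i}`, `0 < a_min ≤ a_{k,i} ≤ a_max`, and
`ζ_l · θ̃^{(k)} = 0` for all reactions `l`), and the initial state satisfies
`x_0 · θ_k ≤ C` for all `k`, then for every `M ≥ (a_max/a_min) C` the rates truncated at
level `(θ_{k,0} + M)(Σ_i z_i)` agree with the original rates along the whole trajectory. -/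
theorem truncated_rates_eq_of_conservation
    {d : ℕ} (hd : 1 ≤ d) {K : Type*} [Fintype K]
    (ζ : K → Fin d → ℝ)
    (θ0 : K → ℝ) (hθ0 : ∀ k, 0 ≤ θ0 k)
    (θ : K → Fin d → ℝ) (hθ : ∀ k i, 0 ≤ θ k i)
    (lam : K → (Fin d → ℝ) → ℝ) (hlam : ∀ k z, 0 ≤ lam k z)
    (hbound : ∀ k z, (∀ i, 0 ≤ z i) →
      lam k z ≤ (θ0 k + ∑ i, θ k i * z i) * (∑ i, z i))
    (θt : K → Fin d → ℝ) (hθt : ∀ k i, 0 ≤ θt k i)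
    (hcons : ∀ k l, ∑ i, ζ l i * θt k i = 0)
    (a : K → Fin d → ℝ) (amin amax : ℝ) (hamin : 0 < amin)
    (ha : ∀ k i, amin ≤ a k i ∧ a k i ≤ amax)
    (hrel : ∀ k i, θt k i = a k i * θ k i)
    (x : ℕ → Fin d → ℝ) (hx : ∀ n i, 0 ≤ x n i)
    (hstep : ∀ n, ∃ l, x (n + 1) = x n + ζ l)
    (C : ℝ) (hinit : ∀ k, ∑ i, x 0 i * θ k i ≤ C) :
    ∀ M : ℝ, (amax / amin) * C ≤ M →
      ∀ n, ∀ k, lam k (x n) = min (lam k (x n)) ((θ0 k + M) * ∑ i, x n i) := by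
  intro M hM n k
  -- conservation: θt k · x n = θt k · x 0
  have hconsv : ∀ m, ∑ i, x m i * θt k i = ∑ i, x 0 i * θt k i := by
    intro m
    induction m with
    | zero => rfl
    | succ m ih =>
      obtain ⟨l, hl⟩ := hstep m
      rw [hl]
      simp only [Pi.add_apply, add_mul, Finset.sum_add_distrib, ih, hcons k l, add_zero]
  -- θ k · x n ≤ M
  have key : ∑ i, θ k i * x n i ≤ M := by
    have h1 : amin * ∑ i, θ k i * x n i ≤ ∑ i, x n i * θt k i := by
      rw [Finset.mul_sum]
      apply Finset.sum_le_sum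
      intro i _
      rw [hrel k i]
      nlinarith [mul_nonneg (mul_nonneg (sub_nonneg.2 (ha k i).1) (hθ k i)) (hx n i)]
    have h2 : ∑ i, x 0 i * θt k i ≤ amax * ∑ i, x 0 i * θ k i := by
      rw [Finset.mul_sum]
      apply Finset.sum_le_sum
      intro i _
      rw [hrel k i]
      nlinarith [mul_nonneg (mul_nonneg (sub_nonneg.2 (ha k i).2) (hθ k i)) (hx 0 i)]
    have h3 : ∑ i, x 0 i * θ k i ≤ C := hinit k
    have hC : 0 ≤ C := by
      refine le_trans ?_ h3
      exact Finset.sum_nonneg fun i _ => mul_nonneg (hx 0 i) (hθ k i)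
    have hamax : 0 < amax := lt_of_lt_of_le hamin (le_trans (ha k ⟨0, hd⟩).1 (ha k ⟨0, hd⟩).2)
    have : amin * ∑ i, θ k i * x n i ≤ amax * C := by
      calc amin * ∑ i, θ k i * x n i ≤ ∑ i, x n i * θt k i := h1
        _ = ∑ i, x 0 i * θt k i := hconsv n
        _ ≤ amax * ∑ i, x 0 i * θ k i := h2
        _ ≤ amax * C := by nlinarith
    have : ∑ i, θ k i * x n i ≤ amax / amin * C := by
      rw [div_mul_eq_mul_div, le_div_iff₀ hamin]
      linarith [this]
    linarith
  -- conclude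
  have hsum : 0 ≤ ∑ i, x n i := Finset.sum_nonneg fun i _ => hx n i
  have : lam k (x n) ≤ (θ0 k + M) * ∑ i, x n i := by
    refine le_trans (hbound k (x n) (hx n)) ?_
    apply mul_le_mul_of_nonneg_right _ hsum
    linarith
  exact (min_eq_left this).symm
end

section
/- Suppose a ∈ ℝ^d satisfies: (1) for every index i not belonging to any pair in P, Σ_{k : θ_{k,i}=1} λ_k g_k(a) = 0; and (2) for every pair (i,i') ∈ P, Σ_{k : θ_{k,i}=1} λ_k g_k(a) − (θ̃_i/θ̃_{i'}) Σ_{k : θ_{k,i'}=1} λ_k g_k(a) = 0. Then the function Φ_a(y) := Σ_{k∈K} λ_k (θ_{k,0} + Σ_i θ_{k,i} y_i) g_k(a) is constant on the conservation set E := { y ∈ ℝ^d_{≥0} : θ̃_i y_i + θ̃_{i'} y_{i'} = M_{(i,i')} for every pair (i,i') ∈ P }, with constant value H̄₀ = Σ_{k : θ_{k,0}=1} λ_k g_k(a) + Σ_{(i,i')∈P} ( M_{(i,i')}/θ̃_{i'} ) Σ_{k : θ_{k,i'}=1} λ_k g_k(a). In particular, with h(y) = a·y, the pair (e^{h}, H̄₀)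 solves the eigenvalue problem Φ_a ≡ H̄₀ on E. -/
open Finset
open scoped Classical

/-- The term `g_k(a) = 1_{fast}(e^{w_k + a·ζ_k} − 1) + 1_{averaged} w_k`. -/
noncomputable def gCoef {d : ℕ} {K : Type*} (fast : K → Prop) (w : K → ℝ)
    (ζ : K → Fin d → ℝ) (a : Fin d → ℝ) (k : K) : ℝ :=
  if fast k then Real.exp (w k + ∑ i, a i * ζ k i) - 1 else w k

/-- Explicit solution of the eigenvalue problem for a multiscale reaction network whose
effective fast process is a Markov chain: if the `y_i`-coefficients vanish for unpaired
species and satisfy the conservation relation for paired species, then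
`Φ_a(y) = Σ_k λ_k (θ_{k,0} + Σ_i θ_{k,i} y_i) g_k(a)` is constant on the conservation set,
with constant value `H̄₀`; i.e. `(e^{a·y}, H̄₀)` solves the eigenvalue problem. -/
theorem eigenvalue_problem_markov_chain
    {d : ℕ} (hd : 1 ≤ d) {K : Type*} [Fintype K]
    (lam : K → ℝ) (hlam : ∀ k, 0 ≤ lam k) (w : K → ℝ)
    (fast : K → Prop)
    (ζ : K → Fin d → ℝ) (hζ : ∀ k i, ζ k i = -1 ∨ ζ k i = 0 ∨ ζ k i = 1)
    (θ0 : K → ℝ) (θ : K → Fin d → ℝ)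
    (hθ0 : ∀ k, θ0 k = 0 ∨ θ0 k = 1)
    (hθ : ∀ k i, θ k i = 0 ∨ θ k i = 1)
    (hsum : ∀ k, θ0 k + ∑ i, θ k i = 1)
    (P : Finset (Fin d × Fin d))
    (hPne : ∀ p ∈ P, p.1 ≠ p.2)
    (hPdisj : ∀ p ∈ P, ∀ q ∈ P, p ≠ q →
      p.1 ≠ q.1 ∧ p.1 ≠ q.2 ∧ p.2 ≠ q.1 ∧ p.2 ≠ q.2)
    (θt : Fin d → ℝ) (hθt : ∀ p ∈ P, 0 < θt p.1 ∧ 0 < θt p.2)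
    (hconsv : ∀ k, ∀ p ∈ P, ζ k p.1 * θt p.1 + ζ k p.2 * θt p.2 = 0)
    (M : Fin d × Fin d → ℝ) (hM : ∀ p ∈ P, 0 < M p)
    (a : Fin d → ℝ)
    (h1 : ∀ i : Fin d, (∀ p ∈ P, i ≠ p.1 ∧ i ≠ p.2) →
      ∑ k ∈ univ.filter (fun k => θ k i = 1), lam k * gCoef fast w ζ a k = 0)
    (h2 : ∀ p ∈ P,
      (∑ k ∈ univ.filter (fun k => θ k p.1 = 1), lam k * gCoef fast w ζ a k) -
        (θt p.1 / θt p.2) *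
          ∑ k ∈ univ.filter (fun k => θ k p.2 = 1), lam k * gCoef fast w ζ a k = 0) :
    ∀ y : Fin d → ℝ, (∀ i, 0 ≤ y i) →
      (∀ p ∈ P, θt p.1 * y p.1 + θt p.2 * y p.2 = M p) →
      ∑ k, lam k * (θ0 k + ∑ i, θ k i * y i) * gCoef fast w ζ a k =
        (∑ k ∈ univ.filter (fun k => θ0 k = 1), lam k * gCoef fast w ζ a k) +
          ∑ p ∈ P, (M p / θt p.2) *
            ∑ k ∈ univ.filter (fun k => θ k p.2 = 1), lam k * gCoef fast w ζ a k := by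
  intro y hy hcons
  classical
  set c : K → ℝ := fun k => lam k * gCoef fast w ζ a k with hc
  set S : Fin d → ℝ := fun i => ∑ k ∈ univ.filter (fun k => θ k i = 1), c k with hS
  have hSexp : ∀ i, S i = ∑ k, c k * θ k i := by
    intro i
    rw [hS]
    simp only
    rw [Finset.sum_filter]
    refine Finset.sum_congr rfl fun k _ => ?_
    rcases hθ k i with h | h <;> simp [h]
  have hlhs : ∑ k, lam k * (θ0 k + ∑ i, θ k i * y i) * gCoef fast w ζ a k
      = (∑ k ∈ univ.filter (fun k => θ0 k = 1), c k) + ∑ i, S i * y i := by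
    have h0 : ∑ k ∈ univ.filter (fun k => θ0 k = 1), c k = ∑ k, c k * θ0 k := by
      rw [Finset.sum_filter]
      refine Finset.sum_congr rfl fun k _ => ?_
      rcases hθ0 k with h | h <;> simp [h]
    have hterm : ∀ k, lam k * (θ0 k + ∑ i, θ k i * y i) * gCoef fast w ζ a k
        = c k * θ0 k + ∑ i, (c k * θ k i) * y i := by
      intro k
      rw [hc]
      simp only
      have hrw : ∑ i, (lam k * gCoef fast w ζ a k * θ k i) * y i
          = lam k * gCoef fast w ζ a k * ∑ i, θ k i * y i := by
        rw [Finset.mul_sum]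
        exact Finset.sum_congr rfl fun i _ => by ring
      rw [hrw]
      ring
    rw [Finset.sum_congr rfl fun k _ => hterm k, Finset.sum_add_distrib, h0,
      Finset.sum_comm]
    congr 1
    refine Finset.sum_congr rfl fun i _ => ?_
    rw [← Finset.sum_mul, ← hSexp i]
  rw [hlhs]
  congr 1
  -- now show ∑ i, S i * y i = ∑ p ∈ P, (M p / θt p.2) * S p.2
  set T : Finset (Fin d) := P.biUnion (fun p => ({p.1, p.2} : Finset (Fin d))) with hT
  have hzero : ∀ i ∈ (univ : Finset (Fin d)), i ∉ T → S i * y i = 0 := by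
    intro i _ hi
    have : ∀ p ∈ P, i ≠ p.1 ∧ i ≠ p.2 := by
      intro p hp
      constructor <;> intro h <;> exact hi (Finset.mem_biUnion.2 ⟨p, hp, by simp [h]⟩)
    rw [hS]
    simp only
    rw [h1 i this, zero_mul]
  rw [← Finset.sum_subset (Finset.subset_univ T) hzero]
  have hdisj : (P : Set (Fin d × Fin d)).PairwiseDisjoint
      (fun p => ({p.1, p.2} : Finset (Fin d))) := by
    intro p hp q hq hpq
    obtain ⟨h1', h2', h3', h4'⟩ := hPdisj p hp q hq hpq
    simp only [Finset.disjoint_left, Finset.mem_insert, Finset.mem_singleton]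
    rintro x hx hx'
    rcases hx with rfl | rfl <;> rcases hx' with h | h <;>
      first | exact h1' h | exact h2' h | exact h3' h | exact h4' h
  rw [hT, Finset.sum_biUnion hdisj]
  refine Finset.sum_congr rfl fun p hp => ?_
  rw [Finset.sum_pair (hPne p hp)]
  have ht2 : θt p.2 ≠ 0 := ne_of_gt (hθt p hp).2
  have hS1 : S p.1 = (θt p.1 / θt p.2) * S p.2 := by
    have := h2 p hp
    rw [hS]
    simp only
    linarith [h2 p hp]
  have hM' := hcons p hp
  rw [hS1]
  field_simp
  linear_combination (S p.2) * hM'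
end

section
/- Suppose (a, u) ∈ ℝ^D × ℝ^C satisfies: (1) for every discrete index i ∈ D not belonging to any pair in P, Σ_{k : θ_{k,i}=1} λ_k g_k(a,u) = 0; and (2) for every pair (i,i') ∈ P, Σ_{k : θ_{k,i}=1} λ_k g_k(a,u) − (θ̃_i/θ̃_{i'}) Σ_{k : θ_{k,i'}=1} λ_k g_k(a,u) = 0. Then the function Φ_{a,u}(y) := Σ_{k∈K} λ_k (θ_{k,0} + Σ_{i∈D} θ_{k,i} y_i) g_k(a,u) is constant on the conservation set E := { y ∈ ℝ^D_{≥0} : θ̃_i y_i + θ̃_{i'} y_{i'} = M_{(i,i')} for every pair (i,i') ∈ P }, with constant value H̄₀ = Σ_{k : θ_{k,0}=1} λ_k g_k(a,u) + Σ_{(i,i')∈P} ( M_{(i,i')}/θ̃_{i'} ) Σ_{k : θ_{k,i'}=1} λ_k g_k(a,u). -/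
open Finset
open scoped Classical

/-- The term `g_k(a,u) = 1_{fast}(e^{w_k + a·ζ_k + u·η_k} − 1) + 1_{averaged}(w_k + u·η_k)`
for a fast process with discrete coordinates `D` and continuous coordinates `C`. -/
noncomputable def gCoefPDMP {D C : Type*} [Fintype D] [Fintype C] {K : Type*}
    (fast : K → Prop) (w : K → ℝ) (ζ : K → D → ℝ) (η : K → C → ℝ)
    (a : D → ℝ) (u : C → ℝ) (k : K) : ℝ :=
  if fast k then Real.exp (w k + (∑ i, a i * ζ k i) + ∑ j, u j * η k j) - 1
  else w k + ∑ j, u j * η k j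

/-- Explicit solution of the eigenvalue problem for a multiscale reaction network whose
effective fast process is a piecewise deterministic Markov process: if the coefficients of
the discrete coordinates `y_i` vanish for unpaired species and satisfy the conservation
relation for paired species, then
`Φ_{a,u}(y) = Σ_k λ_k (θ_{k,0} + Σ_{i∈D} θ_{k,i} y_i) g_k(a,u)` is constant on the
conservation set, with constant value `H̄₀`. -/
theorem eigenvalue_problem_PDMP
    {D C : Type*} [Fintype D] [Fintype C] {K : Type*} [Fintype K]
    (lam : K → ℝ) (hlam : ∀ k, 0 ≤ lam k) (w : K → ℝ)
    (fast : K → Prop)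
    (ζ : K → D → ℝ) (hζ : ∀ k i, ζ k i = -1 ∨ ζ k i = 0 ∨ ζ k i = 1)
    (η : K → C → ℝ)
    (θ0 : K → ℝ) (θ : K → D → ℝ)
    (hθ0 : ∀ k, θ0 k = 0 ∨ θ0 k = 1)
    (hθ : ∀ k i, θ k i = 0 ∨ θ k i = 1)
    (hsum : ∀ k, θ0 k + ∑ i, θ k i = 1)
    (P : Finset (D × D))
    (hPne : ∀ p ∈ P, p.1 ≠ p.2)
    (hPdisj : ∀ p ∈ P, ∀ q ∈ P, p ≠ q →
      p.1 ≠ q.1 ∧ p.1 ≠ q.2 ∧ p.2 ≠ q.1 ∧ p.2 ≠ q.2)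
    (θt : D → ℝ) (hθt : ∀ p ∈ P, 0 < θt p.1 ∧ 0 < θt p.2)
    (hconsv : ∀ k, ∀ p ∈ P, ζ k p.1 * θt p.1 + ζ k p.2 * θt p.2 = 0)
    (M : D × D → ℝ) (hM : ∀ p ∈ P, 0 < M p)
    (a : D → ℝ) (u : C → ℝ)
    (h1 : ∀ i : D, (∀ p ∈ P, i ≠ p.1 ∧ i ≠ p.2) →
      ∑ k ∈ univ.filter (fun k => θ k i = 1), lam k * gCoefPDMP fast w ζ η a u k = 0)
    (h2 : ∀ p ∈ P,
      (∑ k ∈ univ.filter (fun k => θ k p.1 = 1), lam k * gCoefPDMP fast w ζ η a u k) -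
        (θt p.1 / θt p.2) *
          ∑ k ∈ univ.filter (fun k => θ k p.2 = 1), lam k * gCoefPDMP fast w ζ η a u k
        = 0) :
    ∀ y : D → ℝ, (∀ i, 0 ≤ y i) →
      (∀ p ∈ P, θt p.1 * y p.1 + θt p.2 * y p.2 = M p) →
      ∑ k, lam k * (θ0 k + ∑ i, θ k i * y i) * gCoefPDMP fast w ζ η a u k =
        (∑ k ∈ univ.filter (fun k => θ0 k = 1), lam k * gCoefPDMP fast w ζ η a u k) +
          ∑ p ∈ P, (M p / θt p.2) *
            ∑ k ∈ univ.filter (fun k => θ k p.2 = 1), lam k * gCoefPDMP fast w ζ η a u k := by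
  intro y hy hMy
  set G : K → ℝ := fun k => gCoefPDMP fast w ζ η a u k with hG
  set g : K → ℝ := fun k => lam k * G k with hg
  set S : D → ℝ := fun i => ∑ k ∈ univ.filter (fun k => θ k i = 1), g k with hS
  have key : ∀ i, (∑ k : K, θ k i * g k) = S i := by
    intro i
    show (∑ k : K, θ k i * g k) = ∑ k ∈ univ.filter (fun k => θ k i = 1), g k
    rw [Finset.sum_filter]
    refine Finset.sum_congr rfl fun k _ => ?_
    rcases hθ k i with h | h <;> simp [h]
  have hL : (∑ k, lam k * (θ0 k + ∑ i, θ k i * y i) * G k)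
      = (∑ k ∈ univ.filter (fun k => θ0 k = 1), g k) + ∑ i, y i * S i := by
    have hk : ∀ k, lam k * (θ0 k + ∑ i, θ k i * y i) * G k
        = θ0 k * g k + ∑ i, y i * (θ k i * g k) := by
      intro k
      have h' : (∑ i, y i * (θ k i * g k)) = (∑ i, θ k i * y i) * (lam k * G k) := by
        rw [Finset.sum_mul]
        refine Finset.sum_congr rfl fun i _ => ?_
        simp only [hg]; ring
      rw [h']
      simp only [hg]; ring
    rw [Finset.sum_congr rfl fun k _ => hk k, Finset.sum_add_distrib]
    congr 1
    · rw [Finset.sum_filter]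
      refine Finset.sum_congr rfl fun k _ => ?_
      rcases hθ0 k with h | h <;> simp [h]
    · rw [Finset.sum_comm]
      refine Finset.sum_congr rfl fun i _ => ?_
      rw [← Finset.mul_sum, key i]
  rw [hL]
  congr 1
  -- now the discrete part
  set T : Finset D := P.biUnion (fun p => ({p.1, p.2} : Finset D)) with hT
  have hsplit : (∑ i, y i * S i) = ∑ i ∈ T, y i * S i := by
    rw [← Finset.sum_subset (Finset.subset_univ T)]
    intro i _ hiT
    have hun : ∀ p ∈ P, i ≠ p.1 ∧ i ≠ p.2 := by
      intro p hp
      constructor <;> intro h <;> exact hiT (Finset.mem_biUnion.2 ⟨p, hp, by simp [h]⟩)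
    have : S i = 0 := h1 i hun
    rw [this, mul_zero]
  rw [hsplit, hT, Finset.sum_biUnion]
  · refine Finset.sum_congr rfl fun p hp => ?_
    have hne := hPne p hp
    have ht2 : (0:ℝ) < θt p.2 := (hθt p hp).2
    have hS1 : S p.1 = (θt p.1 / θt p.2) * S p.2 := by
      have := h2 p hp
      have h' : S p.1 - (θt p.1 / θt p.2) * S p.2 = 0 := this
      linarith
    rw [Finset.sum_pair hne, hS1]
    have hMp := hMy p hp
    field_simp
    linear_combination S p.2 * hMp
  · intro p hp q hq hpq
    have hd := hPdisj p hp q hq hpq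
    obtain ⟨h11, h12, h21, h22⟩ := hd
    simp only [Finset.disjoint_left, Finset.mem_insert, Finset.mem_singleton]
    rintro i (rfl | rfl)
    · rintro (h | h)
      · exact h11 h
      · exact h12 h
    · rintro (h | h)
      · exact h21 h
      · exact h22 h
end
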